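/- Let R be a nontrivial commutative ring, A a finite free R-module of rank r, and 0 < s < r integers. Let B ⊆ A and C ⊆ A be R-submodules such that B is finite free of rank s, C is finite free of rank r−s, and the quotients A/B and A/C are finite free. Let f : C → A/B and g : B → A/C be the natural maps (inclusion followed by projection). Fix R-bases of the four free modules B, C, A/B, A/C, and let det f ∈ R be the determinant of the matrix of f with respect to the chosen bases of C and A/B, and det g ∈ R the determinant of the matrix of g with respect to the chosen bases of B and A/C. Then there exists a unit u ∈ R^× with det f = u · det g; in particular, det f and det g generate the same ideal of R. -/

import Mathlib

/-!
Choose splittings `A ≃ B × A/B` and `A ≃ C × A/C`, which exist because the quotients are free.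
In the first one the map `A → A/C × A/B`, `a ↦ (a mod C, a mod B)`, is block upper triangular
with diagonal blocks `g` and the identity; in the second one the same map, with its factors
swapped, has diagonal blocks `f` and the identity. The two matrices differ by invertible
changes of coordinates, so their determinants `det g` and `det f` are associated.
-/

open LinearMap Module

section

variable {R : Type*} [CommRing R]
  {M N P M' N' : Type*} [AddCommGroup M] [Module R M] [AddCommGroup N] [Module R N]
  [AddCommGroup P] [Module R P] [AddCommGroup M'] [Module R M'] [AddCommGroup N'] [Module R N']
  {ι κ : Type*} [Fintype ι] [DecidableEq ι] [Fintype κ] [DecidableEq κ]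

theorem LinearMap.det_toMatrix_reindex (b : Basis ι R M) (c : Basis ι R N) (e : ι ≃ κ)
    (φ : M →ₗ[R] N) :
    (toMatrix (b.reindex e) (c.reindex e) φ).det = (toMatrix b c φ).det := by
  have : toMatrix (b.reindex e) (c.reindex e) φ = Matrix.reindex e e (toMatrix b c φ) := by
    ext i j
    simp [toMatrix_apply]
  rw [this, Matrix.det_reindex_self]

theorem LinearMap.associated_det_toMatrix_equiv_comp_comp [Nontrivial R]
    (φ : M →ₗ[R] N) (e₁ : M' ≃ₗ[R] M) (e₂ : N ≃ₗ[R] N')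
    (b : Basis ι R M) (c : Basis ι R N) (b' : Basis κ R M') (c' : Basis κ R N') :
    Associated (toMatrix b c φ).det (toMatrix b' c' (e₂ ∘ₗ φ ∘ₗ e₁)).det := by
  let e : κ ≃ ι := (b'.map e₁).indexEquiv b
  rw [← det_toMatrix_reindex b' c' e, toMatrix_comp _ c, toMatrix_comp _ b, Matrix.det_mul,
    Matrix.det_mul, mul_comm]
  have h₁ := e₁.isUnit_det (b'.reindex e) b
  have h₂ := e₂.isUnit_det c (c'.reindex e)
  exact (associated_mul_unit_right _ _ h₁).trans (associated_mul_unit_right _ _ h₂)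

theorem LinearMap.det_toMatrix_prod_snd (ψ : M × P →ₗ[R] N)
    (bM : Basis ι R M) (bP : Basis κ R P) (bN : Basis ι R N) :
    (toMatrix (bM.prod bP) (bN.prod bP) (ψ.prod (snd R M P))).det =
      (toMatrix bM bN (ψ ∘ₗ inl R M P)).det := by
  have : toMatrix (bM.prod bP) (bN.prod bP) (ψ.prod (snd R M P)) =
      Matrix.fromBlocks (toMatrix bM bN (ψ ∘ₗ inl R M P)) (toMatrix bP bN (ψ ∘ₗ inr R M P))
        0 1 := by
    ext (i | i) (j | j) <;> simp [toMatrix_apply, Finsupp.single_apply, Matrix.one_apply, eq_comm]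
  rw [this, Matrix.det_fromBlocks_zero₂₁, Matrix.det_one, mul_one]

end

theorem Submodule.exists_equiv_prod_quotient {R A : Type*} [Ring R] [AddCommGroup A] [Module R A]
    (B : Submodule R A) [Module.Projective R (A ⧸ B)] :
    ∃ e : A ≃ₗ[R] B × (A ⧸ B), B.subtype = e.symm ∘ₗ LinearMap.inl R B (A ⧸ B) ∧
      B.mkQ = LinearMap.snd R B (A ⧸ B) ∘ₗ e.toLinearMap := by
  obtain ⟨σ, hσ⟩ := B.mkQ.exists_rightInverse_of_surjective B.range_mkQ
  exact ⟨_, ((exact_subtype_mkQ B).splitSurjectiveEquiv B.injective_subtype ⟨σ, hσ⟩).2⟩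

theorem det_natural_maps_associated
    (R : Type*) [CommRing R] [Nontrivial R]
    (A : Type*) [AddCommGroup A] [Module R A]
    (r s : ℕ) (B C : Submodule R A) [Module.Free R (A ⧸ B)] [Module.Free R (A ⧸ C)]
    (f : C →ₗ[R] A ⧸ B) (hf : f = B.mkQ.comp C.subtype)
    (g : B →ₗ[R] A ⧸ C) (hg : g = C.mkQ.comp B.subtype)
    (bB : Module.Basis (Fin s) R B) (bC : Module.Basis (Fin (r - s)) R C)
    (bAB : Module.Basis (Fin (r - s)) R (A ⧸ B)) (bAC : Module.Basis (Fin s) R (A ⧸ C)) :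
    ∃ u : Rˣ, (LinearMap.toMatrix bC bAB f).det = (u : R) * (LinearMap.toMatrix bB bAC g).det := by
  obtain ⟨eB, hB_subtype, hB_mkQ⟩ := B.exists_equiv_prod_quotient
  obtain ⟨eC, hC_subtype, hC_mkQ⟩ := C.exists_equiv_prod_quotient
  have hfactor : (C.mkQ ∘ₗ eB.symm.toLinearMap).prod (snd R B (A ⧸ B)) =
      (LinearEquiv.prodComm R (A ⧸ B) (A ⧸ C)).toLinearMap ∘ₗ
        (B.mkQ ∘ₗ eC.symm.toLinearMap).prod (snd R C (A ⧸ C)) ∘ₗ (eB.symm ≪≫ₗ eC).toLinearMap := by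
    apply LinearMap.ext
    intro p
    have hB : ∀ a, B.mkQ a = (eB a).2 := LinearMap.congr_fun hB_mkQ
    have hC : ∀ a, C.mkQ a = (eC a).2 := LinearMap.congr_fun hC_mkQ
    simp [hB, hC]
  have hdet := associated_det_toMatrix_equiv_comp_comp
    ((B.mkQ ∘ₗ eC.symm.toLinearMap).prod (snd R C (A ⧸ C))) (eB.symm ≪≫ₗ eC) (.prodComm R _ _)
    (bC.prod bAC) (bAB.prod bAC) (bB.prod bAB) (bAC.prod bAB)
  rw [← hfactor, det_toMatrix_prod_snd, det_toMatrix_prod_snd, comp_assoc, comp_assoc,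
    ← hB_subtype, ← hC_subtype, ← hf, ← hg] at hdet
  obtain ⟨u, hu⟩ := hdet.symm
  exact ⟨u, by rw [← hu, mul_comm]⟩
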